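/- arXiv:1504.02585 — 4 statements merged into one kernel-verified Lean document; each statement's English description precedes it below -/
import Mathlib

section
/- Let X be a metric measure space with a doubling measure, 0 < γ ≤ 1/2, and 0 < p < ∞. There exists a constant C > 0 (depending on γ, p, and the doubling constant) such that ‖M_γ u‖_{L^p(X)} ≤ C ‖u‖_{L^p(X)} for every u ∈ L^p(X). -/
open MeasureTheory Metric

/-- The γ-median of `u` over `A`. -/
noncomputable def median {X : Type*} [MeasurableSpace X] (μ : Measure X) (γ : ℝ) (A : Set X)
    (u : X → ℝ) : ℝ :=
  sInf {a : ℝ | μ {x ∈ A | a < u x} < ENNReal.ofReal γ * μ A}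

/-- The γ-median maximal function, as an extended-real valued function. -/
noncomputable def medianMaximal {X : Type*} [MetricSpace X] [MeasurableSpace X]
    (μ : Measure X) (γ : ℝ) (u : X → ℝ) (x : X) : ENNReal :=
  ⨆ (r : ℝ) (_ : 0 < r), ENNReal.ofReal (median μ γ (ball x r) (fun y => |u y|))

/-!
If the `γ`-median of `|u|` on a ball exceeds `t`, then `{|u| > t}` fills at least a
`γ`-fraction of that ball. A Vitali covering argument with the doubling condition therefore gives
the distributional estimate `μ {M_γ u > t} ≤ c³ γ⁻¹ μ {|u| > t}` for every `t`, and integrating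
it against `p t^(p-1) dt` (layer cake) yields the `L^p` bound with `C = (c³ / γ)^(1/p)`.
-/

open Set Filter Topology
open scoped ENNReal

section LayerCake

variable {α : Type*} [MeasurableSpace α] {μ : Measure α} {p : ℝ}

theorem meas_lt_le_lintegral_rpow_div {g : α → ℝ} (hg : AEMeasurable g μ) (hp : 0 < p) {t : ℝ}
    (ht : 0 < t) :
    μ {x | t < g x} ≤ (∫⁻ x, ENNReal.ofReal (g x ^ p) ∂μ) / ENNReal.ofReal (t ^ p) :=
  calc μ {x | t < g x} ≤ μ {x | ENNReal.ofReal (t ^ p) ≤ ENNReal.ofReal (g x ^ p)} :=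
        measure_mono fun x hx =>
          ENNReal.ofReal_le_ofReal (Real.rpow_le_rpow ht.le (le_of_lt hx) hp.le)
    _ ≤ _ := meas_ge_le_lintegral_div (hg.pow_const p).ennreal_ofReal
        (by simpa using Real.rpow_pos_of_pos ht p) ENNReal.ofReal_ne_top

variable {f : α → ℝ≥0∞} {g : α → ℝ} {K : ℝ≥0∞}

theorem ae_ne_top_of_meas_lt_le (hg : AEMeasurable g μ) (hp : 0 < p) (hK : K ≠ ∞)
    (hI : ∫⁻ x, ENNReal.ofReal (g x ^ p) ∂μ ≠ ∞)
    (hfg : ∀ t, 0 < t → μ {x | ENNReal.ofReal t < f x} ≤ K * μ {x | t < g x}) :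
    ∀ᵐ x ∂μ, f x ≠ ∞ := by
  set I := ∫⁻ x, ENNReal.ofReal (g x ^ p) ∂μ
  have hbound : ∀ t, 0 < t → μ {x | f x = ∞} ≤ K * (I / ENNReal.ofReal (t ^ p)) := fun t ht =>
    calc μ {x | f x = ∞} ≤ μ {x | ENNReal.ofReal t < f x} :=
          measure_mono fun x (hx : f x = ∞) => by simp [hx]
      _ ≤ K * μ {x | t < g x} := hfg t ht
      _ ≤ K * (I / ENNReal.ofReal (t ^ p)) := by
          gcongr; exact meas_lt_le_lintegral_rpow_div hg hp ht
  have hlim : Tendsto (fun t : ℝ => K * (I / ENNReal.ofReal (t ^ p))) atTop (𝓝 0) := by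
    have h := ENNReal.tendsto_ofReal_atTop.comp (tendsto_rpow_atTop hp)
    simpa using ENNReal.Tendsto.const_mul (ENNReal.Tendsto.const_div h (Or.inr hI)) (Or.inr hK)
  simpa [ae_iff] using
    le_antisymm (ge_of_tendsto hlim ((eventually_gt_atTop 0).mono hbound)) zero_le

theorem lintegral_rpow_le_of_meas_lt_le_of_aemeasurable (hf : AEMeasurable f μ)
    (hg : AEMeasurable g μ) (hg_nn : 0 ≤ᵐ[μ] g) (hp : 0 < p) (hK : K ≠ ∞)
    (hI : ∫⁻ x, ENNReal.ofReal (g x ^ p) ∂μ ≠ ∞)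
    (hfg : ∀ t, 0 < t → μ {x | ENNReal.ofReal t < f x} ≤ K * μ {x | t < g x}) :
    ∫⁻ x, f x ^ p ∂μ ≤ K * ∫⁻ x, ENNReal.ofReal (g x ^ p) ∂μ := by
  have hf_fin := ae_ne_top_of_meas_lt_le hg hp hK hI hfg
  calc ∫⁻ x, f x ^ p ∂μ = ∫⁻ x, ENNReal.ofReal ((f x).toReal ^ p) ∂μ := by
        refine lintegral_congr_ae ?_
        filter_upwards [hf_fin] with x hx
        rw [← ENNReal.ofReal_rpow_of_nonneg ENNReal.toReal_nonneg hp.le, ENNReal.ofReal_toReal hx]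
    _ = ENNReal.ofReal p *
          ∫⁻ t in Ioi 0, μ {x | t < (f x).toReal} * ENNReal.ofReal (t ^ (p - 1)) :=
        lintegral_rpow_eq_lintegral_meas_lt_mul μ (ae_of_all _ fun _ => ENNReal.toReal_nonneg)
          hf.ennreal_toReal hp
    _ ≤ ENNReal.ofReal p *
          ∫⁻ t in Ioi 0, K * (μ {x | t < g x} * ENNReal.ofReal (t ^ (p - 1))) := by
        refine mul_le_mul_right (setLIntegral_mono' measurableSet_Ioi fun t ht => ?_) _
        rw [← mul_assoc]
        refine mul_le_mul_left ?_ _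
        exact (measure_mono fun x (hx : t < (f x).toReal) =>
          ((ENNReal.ofReal_lt_ofReal_iff_of_nonneg (le_of_lt ht)).2 hx).trans_le
            ENNReal.ofReal_toReal_le).trans (hfg t ht)
    _ = K * ∫⁻ x, ENNReal.ofReal (g x ^ p) ∂μ := by
        rw [lintegral_const_mul' _ _ hK, lintegral_rpow_eq_lintegral_meas_lt_mul μ hg_nn hg hp]
        ring

theorem lintegral_rpow_le_of_meas_lt_le (hg : AEMeasurable g μ) (hg_nn : 0 ≤ᵐ[μ] g) (hp : 0 < p)
    (hK : K ≠ ∞) (hI : ∫⁻ x, ENNReal.ofReal (g x ^ p) ∂μ ≠ ∞)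
    (hfg : ∀ t, 0 < t → μ {x | ENNReal.ofReal t < f x} ≤ K * μ {x | t < g x}) :
    ∫⁻ x, f x ^ p ∂μ ≤ K * ∫⁻ x, ENNReal.ofReal (g x ^ p) ∂μ := by
  -- `f` need not be measurable: pass to a measurable minorant of `f ^ p` with the same integral.
  obtain ⟨F, hF, hFf, hF_eq⟩ := exists_measurable_le_lintegral_eq μ (fun x => f x ^ p)
  have hroot_le : ∀ x, F x ^ p⁻¹ ≤ f x := fun x => by
    simpa [hp.ne'] using ENNReal.rpow_le_rpow (hFf x) (inv_nonneg.2 hp.le)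
  rw [hF_eq]
  simpa [hp.ne'] using lintegral_rpow_le_of_meas_lt_le_of_aemeasurable
    (hF.pow_const p⁻¹).aemeasurable hg hg_nn hp hK hI fun t ht =>
      (measure_mono fun x hx => hx.trans_le (hroot_le x)).trans (hfg t ht)

end LayerCake

theorem Set.PairwiseDisjoint.countable_of_measure_inter_pos {ι α : Type*} [MeasurableSpace α]
    {μ : Measure α} {s : Set ι} {A : ι → Set α} {E : Set α} (hs : s.PairwiseDisjoint A)
    (hA : ∀ i ∈ s, MeasurableSet (A i)) (hE : μ E ≠ ∞) (hpos : ∀ i ∈ s, 0 < μ (A i ∩ E)) :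
    s.Countable := by
  have : IsFiniteMeasure (μ.restrict E) := isFiniteMeasure_restrict.2 hE
  have h := Measure.countable_meas_pos_of_disjoint_iUnion (μ := μ.restrict E)
    (As := fun i : s => A i) (fun i => hA i i.2)
    (fun i j hij => hs i.2 j.2 (Subtype.coe_injective.ne hij))
  have hall : {i : s | 0 < μ.restrict E (A i)} = univ := by
    ext i
    simp [Measure.restrict_apply (hA i i.2), hpos i i.2]
  rw [hall, countable_univ_iff] at h
  exact countable_coe_iff.1 h

theorem le_measure_setOf_lt_of_lt_median {X : Type*} [MeasurableSpace X] {μ : Measure X}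
    {γ : ℝ} (hγ : γ ≤ 1) {A : Set X} {v : X → ℝ} (hv : ∀ x, 0 ≤ v x) {a : ℝ}
    (ha : a < median μ γ A v) :
    ENNReal.ofReal γ * μ A ≤ μ {x ∈ A | a < v x} := by
  by_contra! h
  -- Since `γ ≤ 1`, no negative level lies in the set defining the median; without this lower
  -- bound its `sInf` would be the junk value `0`.
  have hbdd : BddBelow {b : ℝ | μ {x ∈ A | b < v x} < ENNReal.ofReal γ * μ A} := by
    refine ⟨0, fun b (hb : μ {x ∈ A | b < v x} < _) => ?_⟩
    by_contra! hb0
    rw [sep_eq_self_iff_mem_true.2 fun x _ => hb0.trans_le (hv x)] at hb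
    exact (hb.trans_le (mul_le_of_le_one_left' (ENNReal.ofReal_le_one.2 hγ))).false
  exact (csInf_le hbdd h).not_gt ha

section Covering

variable {X : Type*} [PseudoMetricSpace X] [MeasurableSpace X] {μ : Measure X} {c γ : ℝ≥0∞}
  {E : Set X}

theorem measure_ball_two_pow_mul_le
    (hd : ∀ (x : X) (r : ℝ), 0 < r → μ (ball x (2 * r)) ≤ c * μ (ball x r))
    (x : X) {r : ℝ} (hr : 0 < r) (n : ℕ) :
    μ (ball x (2 ^ n * r)) ≤ c ^ n * μ (ball x r) := by
  induction n with
  | zero => simp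
  | succ n ih =>
    calc μ (ball x (2 ^ (n + 1) * r)) = μ (ball x (2 * (2 ^ n * r))) := by ring_nf
      _ ≤ c * μ (ball x (2 ^ n * r)) := hd x _ (by positivity)
      _ ≤ c * (c ^ n * μ (ball x r)) := by gcongr
      _ = c ^ (n + 1) * μ (ball x r) := by ring

theorem measure_ball_eight_mul_le_of_dense
    (hd : ∀ (x : X) (r : ℝ), 0 < r → μ (ball x (2 * r)) ≤ c * μ (ball x r))
    (hγ₀ : γ ≠ 0) (hγ : γ ≠ ∞) (x : X) {r : ℝ} (hr : 0 < r)
    (hdense : γ * μ (ball x r) ≤ μ (ball x r ∩ E)) :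
    μ (ball x (8 * r)) ≤ c ^ 3 / γ * μ (closedBall x r ∩ E) :=
  calc μ (ball x (8 * r)) = μ (ball x (2 ^ 3 * r)) := by norm_num
    _ ≤ c ^ 3 * μ (ball x r) := measure_ball_two_pow_mul_le hd x hr 3
    _ ≤ c ^ 3 * (μ (ball x r ∩ E) / γ) := by
        gcongr
        exact (ENNReal.le_div_iff_mul_le (Or.inl hγ₀) (Or.inl hγ)).2 (mul_comm γ _ ▸ hdense)
    _ ≤ c ^ 3 / γ * μ (closedBall x r ∩ E) := by
        rw [mul_div_assoc', ENNReal.mul_div_right_comm]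
        gcongr
        exact ball_subset_closedBall

variable [OpensMeasurableSpace X]

theorem measure_setOf_dense_ball_le_of_radius_le
    (hpos : ∀ (x : X) (r : ℝ), 0 < r → 0 < μ (ball x r))
    (hd : ∀ (x : X) (r : ℝ), 0 < r → μ (ball x (2 * r)) ≤ c * μ (ball x r)) (hc : c ≠ 0)
    (hγ₀ : γ ≠ 0) (hγ : γ ≠ ∞) (hE : MeasurableSet E) (R : ℝ) :
    μ {x | ∃ r ∈ Ioc 0 R, γ * μ (ball x r) ≤ μ (ball x r ∩ E)} ≤ c ^ 3 / γ * μ E := by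
  set G := {x | ∃ r ∈ Ioc 0 R, γ * μ (ball x r) ≤ μ (ball x r ∩ E)}
  rcases eq_or_ne (μ E) ∞ with hE_top | hE_top
  · simp [hE_top, ENNReal.mul_top, hc, hγ]
  choose! rad hrad hdense using fun x (hx : x ∈ G) => hx
  obtain ⟨u, huG, hdisj, hcov⟩ := Vitali.exists_disjoint_subfamily_covering_enlargement_closedBall
    G id rad R (fun x hx => (hrad x hx).2) 4 (by norm_num)
  simp only [id_eq] at hdisj hcov
  have hu : u.Countable := by
    refine hdisj.countable_of_measure_inter_pos (fun _ _ => measurableSet_closedBall) hE_top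
      fun b hb => ?_
    calc 0 < γ * μ (ball b (rad b)) := ENNReal.mul_pos hγ₀ (hpos b _ (hrad b (huG hb)).1).ne'
      _ ≤ μ (ball b (rad b) ∩ E) := hdense b (huG hb)
      _ ≤ μ (closedBall b (rad b) ∩ E) := by gcongr; exact ball_subset_closedBall
  have hG_cover : G ⊆ ⋃ b ∈ u, ball b (8 * rad b) := fun x hx => by
    obtain ⟨b, hb, hsub⟩ := hcov x hx
    have hx_mem : x ∈ closedBall b (4 * rad b) := hsub (mem_closedBall_self (hrad x hx).1.le)
    exact mem_biUnion hb (closedBall_subset_ball (by linarith [(hrad b (huG hb)).1]) hx_mem)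
  calc μ G ≤ μ (⋃ b ∈ u, ball b (8 * rad b)) := measure_mono hG_cover
    _ ≤ ∑' b : u, μ (ball b (8 * rad b)) := measure_biUnion_le μ hu _
    _ ≤ ∑' b : u, c ^ 3 / γ * μ (closedBall b (rad b) ∩ E) :=
        ENNReal.tsum_le_tsum fun b =>
          measure_ball_eight_mul_le_of_dense hd hγ₀ hγ b (hrad b (huG b.2)).1 (hdense b (huG b.2))
    _ = c ^ 3 / γ * μ (⋃ b ∈ u, closedBall b (rad b) ∩ E) := by
        rw [ENNReal.tsum_mul_left, measure_biUnion hu (hdisj.mono fun _ => inter_subset_left)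
          fun _ _ => measurableSet_closedBall.inter hE]
    _ ≤ c ^ 3 / γ * μ E := by
        gcongr
        exact iUnion₂_subset fun _ _ => inter_subset_right

theorem measure_setOf_dense_ball_le (hpos : ∀ (x : X) (r : ℝ), 0 < r → 0 < μ (ball x r))
    (hd : ∀ (x : X) (r : ℝ), 0 < r → μ (ball x (2 * r)) ≤ c * μ (ball x r)) (hc : c ≠ 0)
    (hγ₀ : γ ≠ 0) (hγ : γ ≠ ∞) (hE : MeasurableSet E) :
    μ {x | ∃ r, 0 < r ∧ γ * μ (ball x r) ≤ μ (ball x r ∩ E)} ≤ c ^ 3 / γ * μ E := by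
  have hmono : Monotone fun n : ℕ =>
      {x | ∃ r ∈ Ioc 0 (n : ℝ), γ * μ (ball x r) ≤ μ (ball x r ∩ E)} :=
    fun m n hmn x ⟨r, hr, hx⟩ => ⟨r, ⟨hr.1, hr.2.trans (by exact_mod_cast hmn)⟩, hx⟩
  calc μ {x | ∃ r, 0 < r ∧ γ * μ (ball x r) ≤ μ (ball x r ∩ E)}
      ≤ μ (⋃ n : ℕ, {x | ∃ r ∈ Ioc 0 (n : ℝ), γ * μ (ball x r) ≤ μ (ball x r ∩ E)}) :=
        measure_mono fun x ⟨r, hr, hx⟩ => mem_iUnion.2 ⟨⌈r⌉₊, r, ⟨hr, Nat.le_ceil r⟩, hx⟩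
    _ = ⨆ n : ℕ, μ {x | ∃ r ∈ Ioc 0 (n : ℝ), γ * μ (ball x r) ≤ μ (ball x r ∩ E)} :=
        hmono.measure_iUnion
    _ ≤ c ^ 3 / γ * μ E :=
        iSup_le fun n => measure_setOf_dense_ball_le_of_radius_le hpos hd hc hγ₀ hγ hE n

end Covering

section MedianMaximal

variable {X : Type*} [MetricSpace X] [MeasurableSpace X] {μ : Measure X} {γ : ℝ} {u : X → ℝ}

theorem setOf_lt_medianMaximal_subset (hγ : γ ≤ 1) (t : ℝ) :
    {x | ENNReal.ofReal t < medianMaximal μ γ u x} ⊆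
      {x | ∃ r, 0 < r ∧ ENNReal.ofReal γ * μ (ball x r) ≤ μ (ball x r ∩ {y | t < |u y|})} := by
  intro x (hx : ENNReal.ofReal t < ⨆ (r : ℝ) (_ : 0 < r), _)
  obtain ⟨r, hx⟩ := lt_iSup_iff.1 hx
  obtain ⟨hr, hx⟩ := lt_iSup_iff.1 hx
  exact ⟨r, hr, le_measure_setOf_lt_of_lt_median hγ (fun _ => abs_nonneg _)
    (ENNReal.ofReal_lt_ofReal_iff'.1 hx).1⟩

theorem measure_lt_medianMaximal_le [OpensMeasurableSpace X] {c : ℝ≥0∞}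
    (hpos : ∀ (x : X) (r : ℝ), 0 < r → 0 < μ (ball x r))
    (hd : ∀ (x : X) (r : ℝ), 0 < r → μ (ball x (2 * r)) ≤ c * μ (ball x r)) (hc : c ≠ 0)
    (hγ₀ : 0 < γ) (hγ : γ ≤ 1) (hu : Measurable u) (t : ℝ) :
    μ {x | ENNReal.ofReal t < medianMaximal μ γ u x} ≤
      c ^ 3 / ENNReal.ofReal γ * μ {y | t < |u y|} :=
  (measure_mono (setOf_lt_medianMaximal_subset hγ t)).trans <|
    measure_setOf_dense_ball_le hpos hd hc (ENNReal.ofReal_pos.2 hγ₀).ne' ENNReal.ofReal_ne_top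
      (measurableSet_lt measurable_const hu.abs)

end MedianMaximal

theorem median_maximal_Lp_bound_general {X : Type*} [MetricSpace X] [MeasurableSpace X] [BorelSpace X]
    (μ : Measure X)
    (hpos : ∀ (x : X) (r : ℝ), 0 < r → 0 < μ (ball x r))
    (c : ℝ) (hc : 0 < c)
    (hdoubling : ∀ (x : X) (r : ℝ), 0 < r → μ (ball x (2 * r)) ≤ ENNReal.ofReal c * μ (ball x r))
    (γ : ℝ) (hγ0 : 0 < γ) (hγ : γ ≤ 1 / 2)
    (p : ℝ) (hp : 0 < p) :
    ∃ C : ℝ, 0 < C ∧ ∀ u : X → ℝ, Measurable u →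
      ∫⁻ x, ENNReal.ofReal (|u x| ^ p) ∂μ < ⊤ →
      (∫⁻ x, medianMaximal μ γ u x ^ p ∂μ) ^ (1 / p) ≤
        ENNReal.ofReal C * (∫⁻ x, ENNReal.ofReal (|u x| ^ p) ∂μ) ^ (1 / p) := by
  set K := ENNReal.ofReal c ^ 3 / ENNReal.ofReal γ
  have hc' : ENNReal.ofReal c ≠ 0 := (ENNReal.ofReal_pos.2 hc).ne'
  have hK : K ≠ ∞ := ENNReal.div_ne_top (by simp) (ENNReal.ofReal_pos.2 hγ0).ne'
  have hK₀ : K ≠ 0 := by simp [K, hc']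
  have hKp : K ^ (1 / p) ≠ ∞ := ENNReal.rpow_ne_top_of_nonneg (by positivity) hK
  refine ⟨(K ^ (1 / p)).toReal,
    ENNReal.toReal_pos (ENNReal.rpow_pos (pos_iff_ne_zero.2 hK₀) hK).ne' hKp, fun u hu hI => ?_⟩
  have hLp : ∫⁻ x, medianMaximal μ γ u x ^ p ∂μ ≤ K * ∫⁻ x, ENNReal.ofReal (|u x| ^ p) ∂μ :=
    lintegral_rpow_le_of_meas_lt_le hu.abs.aemeasurable (ae_of_all _ fun _ => abs_nonneg _) hp hK
      hI.ne fun t _ => measure_lt_medianMaximal_le hpos hdoubling hc' hγ0 (by linarith) hu t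
  rw [ENNReal.ofReal_toReal hKp, ← ENNReal.mul_rpow_of_nonneg _ _ (by positivity)]
  exact ENNReal.rpow_le_rpow hLp (by positivity)

theorem median_maximal_Lp_bound {X : Type*} [MetricSpace X] [MeasurableSpace X] [BorelSpace X]
    (μ : Measure X)
    (hpos : ∀ (x : X) (r : ℝ), 0 < r → 0 < μ (ball x r))
    (hfin : ∀ (x : X) (r : ℝ), 0 < r → μ (ball x r) < ⊤)
    (c : ℝ) (hc : 0 < c)
    (hdoubling : ∀ (x : X) (r : ℝ), 0 < r → μ (ball x (2 * r)) ≤ ENNReal.ofReal c * μ (ball x r))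
    (γ : ℝ) (hγ0 : 0 < γ) (hγ : γ ≤ 1 / 2)
    (p : ℝ) (hp : 0 < p) :
    ∃ C : ℝ, 0 < C ∧ ∀ u : X → ℝ, Measurable u →
      ∫⁻ x, ENNReal.ofReal (|u x| ^ p) ∂μ < ⊤ →
      (∫⁻ x, medianMaximal μ γ u x ^ p ∂μ) ^ (1 / p) ≤
        ENNReal.ofReal C * (∫⁻ x, ENNReal.ofReal (|u x| ^ p) ∂μ) ^ (1 / p) :=
  median_maximal_Lp_bound_general μ hpos c hc hdoubling γ hγ0 hγ p hp
end

section
/- Let X be a metric measure space, u a measurable a.e.-finite function, g a nonnegative measurable function such that |u(x)−u(y)| ≤ d(x,y)^s (g(x)+g(y)) for a.e. x,y (an s-gradient, s > 0). Assume X has the nonempty spheres property and μ is doubling. Then for 0 < γ ≤ 1/2 there is a constant C (depending only on s, γ and the doubling constant) such that inf_{c∈ℝ} m_{|u−c|}^γ(B(x,r)) ≤ C r^s m_g^{γ/C}(B(x,r')) for every ball, with a suitably enlarged radius r' ≤ 4r. In particular, with the enlarged ball B(x,2r) one may take inf_{c∈ℝ} m_{|u−c|}^γ(B(x,r)) ≤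 2^{s+1} r^s m_g^γ(B(x,2r)) after adjusting γ by a doubling-dependent constant. -/
open MeasureTheory Metric

/-! Let `m` be the `γ'`-median of `g` on `B(x, 2r)`. When `γ' c_D ≤ γ / 2`, doubling makes the
points of `B(x, r)` where `g > m`, together with the null set `E`, a set of measure below
`γ μ(B(x, r))`. So some `z ∈ B(x, r)` lies outside it, and for every other such `y` the
`s`-gradient inequality gives `|u y - u z| ≤ (2r)^s · 2m`: the `γ`-median of `|u - u z|` on
`B(x, r)` is at most `2^(s+1) r^s m`. Both claims follow with `C = max (2^(s+1)) (2 c_D)` and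
`γ' = γ / C`. -/

section Median

variable {X : Type*} [MeasurableSpace X] {μ : Measure X} {γ : ℝ} {A : Set X} {v : X → ℝ}

lemma ofReal_mul_measure_le (hγ : γ ≤ 1) : ENNReal.ofReal γ * μ A ≤ μ A :=
  mul_le_of_le_one_left' (ENNReal.ofReal_le_one.2 hγ)

lemma median_levels_subset_Ici (hγ : γ ≤ 1) (hv : ∀ x, 0 ≤ v x) :
    {a : ℝ | μ {x ∈ A | a < v x} < ENNReal.ofReal γ * μ A} ⊆ Set.Ici 0 := by
  intro a ha
  rw [Set.mem_Ici]
  by_contra! hneg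
  have hall : {x ∈ A | a < v x} = A :=
    Set.sep_eq_self_iff_mem_true.2 fun x _ => hneg.trans_le (hv x)
  replace ha : μ {x ∈ A | a < v x} < ENNReal.ofReal γ * μ A := ha
  rw [hall] at ha
  exact (ha.trans_le (ofReal_mul_measure_le hγ)).false

lemma median_nonneg (hγ : γ ≤ 1) (hv : ∀ x, 0 ≤ v x) : 0 ≤ median μ γ A v :=
  Real.sInf_nonneg fun _ ha => median_levels_subset_Ici hγ hv ha

lemma median_le_of_measure_lt (hγ : γ ≤ 1) (hv : ∀ x, 0 ≤ v x) {a : ℝ}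
    (ha : μ {x ∈ A | a < v x} < ENNReal.ofReal γ * μ A) : median μ γ A v ≤ a :=
  csInf_le ⟨0, fun _ hb => median_levels_subset_Ici hγ hv hb⟩ ha

lemma median_levels_nonempty (hA : MeasurableSet A) (hAfin : μ A ≠ ⊤)
    (hApos : 0 < ENNReal.ofReal γ * μ A) (hv : Measurable v) :
    {a : ℝ | μ {x ∈ A | a < v x} < ENNReal.ofReal γ * μ A}.Nonempty := by
  have hanti : Antitone fun n : ℕ => {x ∈ A | (n : ℝ) < v x} :=
    fun i j hij x hx => ⟨hx.1, (Nat.cast_le.2 hij).trans_lt hx.2⟩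
  have hempty : ⋂ n : ℕ, {x ∈ A | (n : ℝ) < v x} = ∅ := by
    refine Set.eq_empty_of_forall_notMem fun x hx => ?_
    obtain ⟨n, hn⟩ := exists_nat_ge (v x)
    exact hn.not_gt (Set.mem_iInter.1 hx n).2
  have hlim := hanti.measure_iInter
    (fun n => (hA.inter (measurableSet_lt measurable_const hv)).nullMeasurableSet)
    ⟨0, measure_ne_top_of_subset (Set.sep_subset _ _) hAfin⟩
  rw [hempty, measure_empty] at hlim
  obtain ⟨n, hn⟩ := iInf_lt_iff.1 (hlim ▸ hApos)
  exact ⟨n, hn⟩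

lemma measure_median_lt_le (hA : MeasurableSet A) (hAfin : μ A ≠ ⊤)
    (hApos : 0 < ENNReal.ofReal γ * μ A) (hv : Measurable v) :
    μ {x ∈ A | median μ γ A v < v x} ≤ ENNReal.ofReal γ * μ A := by
  set m := median μ γ A v
  have hlevel : ∀ a, m < a → μ {x ∈ A | a < v x} < ENNReal.ofReal γ * μ A := by
    intro a ha
    obtain ⟨b, hb, hba⟩ :=
      exists_lt_of_csInf_lt (median_levels_nonempty hA hAfin hApos hv) ha
    have hsub : {x ∈ A | a < v x} ⊆ {x ∈ A | b < v x} := fun x hx => ⟨hx.1, hba.trans hx.2⟩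
    exact (measure_mono hsub).trans_lt hb
  have hunion : {x ∈ A | m < v x} = ⋃ n : ℕ, {x ∈ A | m + 1 / ((n : ℝ) + 1) < v x} := by
    ext x
    simp only [Set.mem_iUnion, Set.mem_ofPred_eq]
    constructor
    · rintro ⟨hxA, hx⟩
      obtain ⟨n, hn⟩ := exists_nat_one_div_lt (sub_pos.2 hx)
      exact ⟨n, hxA, by linarith⟩
    · rintro ⟨n, hxA, hx⟩
      exact ⟨hxA, (lt_add_of_pos_right m Nat.one_div_pos_of_nat).trans hx⟩
  have hmono : Monotone fun n : ℕ => {x ∈ A | m + 1 / ((n : ℝ) + 1) < v x} :=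
    fun i j hij x hx => ⟨hx.1, lt_of_le_of_lt (by gcongr) hx.2⟩
  rw [hunion, hmono.measure_iUnion]
  exact iSup_le fun n => (hlevel _ (lt_add_of_pos_right m Nat.one_div_pos_of_nat)).le

lemma exists_mem_notMem_of_measure_lt {B : Set X} (h : μ B < μ A) : ∃ z ∈ A, z ∉ B := by
  by_contra! hAB
  exact h.not_ge (measure_mono hAB)

lemma sInf_median_abs_sub_le {u : X → ℝ} {B : Set X} (hγ : γ ≤ 1)
    (hB : μ B < ENNReal.ofReal γ * μ A) {a : ℝ}
    (hosc : ∀ y ∈ A, y ∉ B → ∀ z ∈ A, z ∉ B → |u y - u z| ≤ a) :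
    sInf {t : ℝ | ∃ c : ℝ, t = median μ γ A (fun y => |u y - c|)} ≤ a := by
  obtain ⟨z, hzA, hzB⟩ :=
    exists_mem_notMem_of_measure_lt (hB.trans_le (ofReal_mul_measure_le hγ))
  have hsub : {y ∈ A | a < |u y - u z|} ⊆ B := fun y hy =>
    by_contra fun hyB => (hosc y hy.1 hyB z hzA hzB).not_gt hy.2
  calc sInf {t : ℝ | ∃ c : ℝ, t = median μ γ A (fun y => |u y - c|)}
      ≤ median μ γ A (fun y => |u y - u z|) := by
        refine csInf_le ⟨0, ?_⟩ ⟨u z, rfl⟩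
        rintro _ ⟨c, rfl⟩
        exact median_nonneg hγ fun _ => abs_nonneg _
    _ ≤ a := median_le_of_measure_lt hγ (fun _ => abs_nonneg _)
        ((measure_mono hsub).trans_lt hB)

end Median

lemma sInf_median_abs_sub_le_median_of_doubling {X : Type*} [PseudoMetricSpace X]
    [MeasurableSpace X] [OpensMeasurableSpace X] (μ : Measure X) {u g : X → ℝ} {E : Set X}
    {x : X} {r s cD γ γ' : ℝ} (hr : 0 ≤ r) (hs : 0 ≤ s) (hγ0 : 0 < γ) (hγ : γ ≤ 1)
    (hγ'0 : 0 < γ') (hγ'cD : γ' * cD ≤ γ / 2)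
    (hpos : μ (ball x r) ≠ 0) (hfin : μ (ball x (2 * r)) ≠ ⊤)
    (hdoubling : μ (ball x (2 * r)) ≤ ENNReal.ofReal cD * μ (ball x r))
    (hg : Measurable g) (hg0 : ∀ x, 0 ≤ g x) (hE : μ E = 0)
    (hgrad : ∀ x ∉ E, ∀ y ∉ E, |u x - u y| ≤ dist x y ^ s * (g x + g y)) :
    sInf {t : ℝ | ∃ c : ℝ, t = median μ γ (ball x r) (fun y => |u y - c|)} ≤
      2 ^ (s + 1) * r ^ s * median μ γ' (ball x (2 * r)) g := by
  set m := median μ γ' (ball x (2 * r)) g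
  set B := {y ∈ ball x r | m < g y} ∪ E
  have hball : ball x r ⊆ ball x (2 * r) := ball_subset_ball (by linarith)
  have hpos2 : 0 < ENNReal.ofReal γ' * μ (ball x (2 * r)) :=
    ENNReal.mul_pos (ENNReal.ofReal_pos.2 hγ'0).ne' fun h => hpos (measure_mono_null hball h)
  have hB : μ B < ENNReal.ofReal γ * μ (ball x r) :=
    calc μ B ≤ μ {y ∈ ball x r | m < g y} + μ E := measure_union_le _ _
      _ = μ {y ∈ ball x r | m < g y} := by rw [hE, add_zero]
      _ ≤ μ {y ∈ ball x (2 * r) | m < g y} := measure_mono fun y hy => ⟨hball hy.1, hy.2⟩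
      _ ≤ ENNReal.ofReal γ' * μ (ball x (2 * r)) :=
          measure_median_lt_le measurableSet_ball hfin hpos2 hg
      _ ≤ ENNReal.ofReal γ' * (ENNReal.ofReal cD * μ (ball x r)) := by gcongr
      _ = ENNReal.ofReal (γ' * cD) * μ (ball x r) := by
          rw [← mul_assoc, ENNReal.ofReal_mul hγ'0.le]
      _ ≤ ENNReal.ofReal (γ / 2) * μ (ball x r) := by gcongr
      _ < ENNReal.ofReal γ * μ (ball x r) :=
          (ENNReal.mul_lt_mul_iff_left hpos (measure_ne_top_of_subset hball hfin)).2
            ((ENNReal.ofReal_lt_ofReal_iff hγ0).2 (half_lt_self hγ0))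
  refine sInf_median_abs_sub_le hγ hB fun y hy hyB z hz hzB => ?_
  have hgood : ∀ w ∈ ball x r, w ∉ B → w ∉ E ∧ g w ≤ m := fun w hw hwB =>
    ⟨fun h => hwB (Or.inr h), not_lt.1 fun h => hwB (Or.inl ⟨hw, h⟩)⟩
  obtain ⟨hyE, hgy⟩ := hgood y hy hyB
  obtain ⟨hzE, hgz⟩ := hgood z hz hzB
  have hdist : dist y z ≤ 2 * r :=
    (dist_triangle_right y z x).trans (by linarith [mem_ball.1 hy, mem_ball.1 hz])
  calc |u y - u z| ≤ dist y z ^ s * (g y + g z) := hgrad y hyE z hzE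
    _ ≤ (2 * r) ^ s * (2 * m) :=
        mul_le_mul (Real.rpow_le_rpow dist_nonneg hdist hs) (by linarith)
          (add_nonneg (hg0 y) (hg0 z)) (by positivity)
    _ = 2 ^ (s + 1) * r ^ s * m := by
        rw [Real.mul_rpow zero_le_two hr, Real.rpow_add_one two_ne_zero]
        ring

theorem median_poincare_general {X : Type*} [MetricSpace X] [MeasurableSpace X] [BorelSpace X]
    (μ : Measure X)
    (hpos : ∀ (x : X) (r : ℝ), 0 < r → 0 < μ (ball x r))
    (hfin : ∀ (x : X) (r : ℝ), 0 < r → μ (ball x r) < ⊤)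
    (cD : ℝ)
    (hdoubling : ∀ (x : X) (r : ℝ), 0 < r →
      μ (ball x (2 * r)) ≤ ENNReal.ofReal cD * μ (ball x r))
    (s : ℝ) (hs : 0 < s) (γ : ℝ) (hγ0 : 0 < γ) (hγ : γ ≤ 1 / 2)
    (u : X → ℝ)
    (g : X → ℝ) (hg : Measurable g) (hg0 : ∀ x, 0 ≤ g x)
    (E : Set X) (hE : μ E = 0)
    (hgrad : ∀ x ∉ E, ∀ y ∉ E, |u x - u y| ≤ dist x y ^ s * (g x + g y)) :
    ∃ C : ℝ, 0 < C ∧ γ / C ≤ 1 / 2 ∧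
      (∀ (x : X) (r : ℝ), 0 < r → ∃ r' : ℝ, 0 < r' ∧ r' ≤ 4 * r ∧
        sInf {t : ℝ | ∃ c : ℝ, t = median μ γ (ball x r) (fun y => |u y - c|)} ≤
          C * r ^ s * median μ (γ / C) (ball x r') g) ∧
      (∃ γ' : ℝ, 0 < γ' ∧ γ' ≤ γ ∧
        ∀ (x : X) (r : ℝ), 0 < r →
          sInf {t : ℝ | ∃ c : ℝ, t = median μ γ (ball x r) (fun y => |u y - c|)} ≤
            2 ^ (s + 1) * r ^ s * median μ γ' (ball x (2 * r)) g) := by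
  set C := max (2 ^ (s + 1)) (2 * cD)
  have h2C : 2 ≤ C := le_max_of_le_left <|
    calc (2 : ℝ) = 2 ^ (1 : ℝ) := (Real.rpow_one 2).symm
      _ ≤ 2 ^ (s + 1) := Real.rpow_le_rpow_of_exponent_le one_le_two (by linarith)
  have hC0 : 0 < C := by linarith
  have hγC : γ / C ≤ γ := div_le_self hγ0.le (by linarith)
  have hγCcD : γ / C * cD ≤ γ / 2 := by
    rw [div_mul_eq_mul_div, div_le_div_iff₀ hC0 two_pos]
    linarith [mul_le_mul_of_nonneg_left (le_max_right (2 ^ (s + 1)) (2 * cD)) hγ0.le]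
  have key : ∀ (x : X) (r : ℝ), 0 < r →
      sInf {t : ℝ | ∃ c : ℝ, t = median μ γ (ball x r) (fun y => |u y - c|)} ≤
        2 ^ (s + 1) * r ^ s * median μ (γ / C) (ball x (2 * r)) g := fun x r hr =>
    sInf_median_abs_sub_le_median_of_doubling μ hr.le hs.le hγ0 (by linarith) (by positivity)
      hγCcD (hpos x r hr).ne' (hfin x (2 * r) (by positivity)).ne (hdoubling x r hr) hg hg0
      hE hgrad
  refine ⟨C, hC0, hγC.trans hγ, fun x r hr => ⟨2 * r, by positivity, by linarith, ?_⟩,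
    γ / C, by positivity, hγC, key⟩
  exact (key x r hr).trans <| mul_le_mul_of_nonneg_right
    (mul_le_mul_of_nonneg_right (le_max_left _ _) (by positivity))
    (median_nonneg (by linarith) hg0)

theorem median_poincare {X : Type*} [MetricSpace X] [MeasurableSpace X] [BorelSpace X]
    (μ : Measure X)
    (hpos : ∀ (x : X) (r : ℝ), 0 < r → 0 < μ (ball x r))
    (hfin : ∀ (x : X) (r : ℝ), 0 < r → μ (ball x r) < ⊤)
    (cD : ℝ) (hcD : 0 < cD)
    (hdoubling : ∀ (x : X) (r : ℝ), 0 < r →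
      μ (ball x (2 * r)) ≤ ENNReal.ofReal cD * μ (ball x r))
    (hspheres : ∀ (x : X) (r : ℝ), 0 < r → ∃ y : X, dist x y = r)
    (s : ℝ) (hs : 0 < s) (γ : ℝ) (hγ0 : 0 < γ) (hγ : γ ≤ 1 / 2)
    (u : X → ℝ) (hu : Measurable u)
    (g : X → ℝ) (hg : Measurable g) (hg0 : ∀ x, 0 ≤ g x)
    (E : Set X) (hE : μ E = 0)
    (hgrad : ∀ x ∉ E, ∀ y ∉ E, |u x - u y| ≤ dist x y ^ s * (g x + g y)) :
    ∃ C : ℝ, 0 < C ∧ γ / C ≤ 1 / 2 ∧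
      (∀ (x : X) (r : ℝ), 0 < r → ∃ r' : ℝ, 0 < r' ∧ r' ≤ 4 * r ∧
        sInf {t : ℝ | ∃ c : ℝ, t = median μ γ (ball x r) (fun y => |u y - c|)} ≤
          C * r ^ s * median μ (γ / C) (ball x r') g) ∧
      (∃ γ' : ℝ, 0 < γ' ∧ γ' ≤ γ ∧
        ∀ (x : X) (r : ℝ), 0 < r →
          sInf {t : ℝ | ∃ c : ℝ, t = median μ γ (ball x r) (fun y => |u y - c|)} ≤
            2 ^ (s + 1) * r ^ s * median μ γ' (ball x (2 * r)) g) :=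
  median_poincare_general μ hpos hfin cD hdoubling s hs γ hγ0 hγ u g hg hg0 E hE hgrad
end

section
/- Let X be a doubling metric measure space with balls of positive finite measure, 0 < d < ∞, 0 < θ < ∞, 0 < R < ∞. There exists a constant C > 0 such that μ(E) ≤ C · H^{d,θ}_R(E) for every measurable set E ⊂ X, where H^{d,θ}_R is the Netrusov–Hausdorff content of codimension d. -/
open MeasureTheory Metric

/-- The Netrusov--Hausdorff content of codimension `d` with parameters `θ` and `R`. -/
noncomputable def NHcontent {X : Type*} [MetricSpace X] [MeasurableSpace X]
    (μ : Measure X) (d θ : ℝ) (R : ENNReal) (E : Set X) : ENNReal :=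
  ⨅ (c : ℕ → X) (rad : ℕ → ℝ) (_ : ∀ j, 0 < rad j)
    (_ : ∀ j, ENNReal.ofReal (rad j) ≤ R) (_ : E ⊆ ⋃ j, ball (c j) (rad j)),
    (∑' i : ℤ,
      (∑' j : {j : ℕ // (2 : ℝ) ^ (-i) ≤ rad j ∧ rad j < (2 : ℝ) ^ (-i + 1)},
        μ (ball (c j) (rad j)) / ENNReal.ofReal (rad j ^ d)) ^ θ) ^ (1 / θ)

lemma exists_bucket {r : ℝ} (hr : 0 < r) :
    ∃ i : ℤ, (2 : ℝ) ^ (-i) ≤ r ∧ r < (2 : ℝ) ^ (-i + 1) := by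
  refine ⟨-⌊Real.logb 2 r⌋, ?_, ?_⟩
  · have h1 : ((⌊Real.logb 2 r⌋ : ℝ)) ≤ Real.logb 2 r := Int.floor_le _
    calc (2 : ℝ) ^ (-(-⌊Real.logb 2 r⌋)) = (2 : ℝ) ^ ((⌊Real.logb 2 r⌋ : ℝ)) := by
          rw [neg_neg, Real.rpow_intCast]
    _ ≤ (2 : ℝ) ^ Real.logb 2 r := Real.rpow_le_rpow_of_exponent_le one_le_two h1
    _ = r := Real.rpow_logb two_pos (by norm_num) hr
  · have h1 : Real.logb 2 r < (⌊Real.logb 2 r⌋ : ℝ) + 1 := Int.lt_floor_add_one _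
    calc r = (2 : ℝ) ^ Real.logb 2 r := (Real.rpow_logb two_pos (by norm_num) hr).symm
    _ < (2 : ℝ) ^ ((⌊Real.logb 2 r⌋ : ℝ) + 1) := Real.rpow_lt_rpow_of_exponent_lt one_lt_two h1
    _ = (2 : ℝ) ^ (-(-⌊Real.logb 2 r⌋) + 1) := by
          rw [neg_neg]
          rw [show ((⌊Real.logb 2 r⌋ : ℝ) + 1) = ((⌊Real.logb 2 r⌋ + 1 : ℤ) : ℝ) by push_cast; ring]
          rw [Real.rpow_intCast]

theorem measure_le_NHcontent {X : Type*} [MetricSpace X] [MeasurableSpace X] [BorelSpace X]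
    (μ : Measure X)
    (hpos : ∀ (x : X) (r : ℝ), 0 < r → 0 < μ (ball x r))
    (hfin : ∀ (x : X) (r : ℝ), 0 < r → μ (ball x r) < ⊤)
    (cD : ℝ) (hcD : 0 < cD)
    (hdoubling : ∀ (x : X) (r : ℝ), 0 < r →
      μ (ball x (2 * r)) ≤ ENNReal.ofReal cD * μ (ball x r))
    (d θ R : ℝ) (hd : 0 < d) (hθ : 0 < θ) (hR : 0 < R) :
    ∃ C : ℝ, 0 < C ∧ ∀ E : Set X, MeasurableSet E →
      μ E ≤ ENNReal.ofReal C * NHcontent μ d θ (ENNReal.ofReal R) E := by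
  classical
  set i₀ : ℤ := ⌈-Real.logb 2 R⌉ with hi₀
  set r2d : ℝ := (2 : ℝ) ^ (-d) with hr2d
  have hr2d_pos : 0 < r2d := Real.rpow_pos_of_pos two_pos _
  have hr2d_lt : r2d < 1 := Real.rpow_lt_one_of_one_lt_of_neg one_lt_two (neg_lt_zero.mpr hd)
  set rE : ENNReal := ENNReal.ofReal r2d with hrE
  have hrE_lt : rE < 1 := by
    rw [hrE]
    exact ENNReal.ofReal_lt_one.mpr hr2d_lt
  set b : ℝ := ((2 : ℝ) ^ (-i₀ + 1)) ^ d with hb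
  have hb_pos : 0 < b := Real.rpow_pos_of_pos (zpow_pos two_pos _) _
  set K : ENNReal := ENNReal.ofReal b * (1 - rE)⁻¹ with hK
  have hK_ne_top : K ≠ ⊤ := by
    apply ENNReal.mul_ne_top ENNReal.ofReal_ne_top
    exact ENNReal.inv_ne_top.mpr (tsub_pos_of_lt hrE_lt).ne'
  refine ⟨K.toReal + 1, by positivity, ?_⟩
  have hKC : K ≤ ENNReal.ofReal (K.toReal + 1) := by
    conv_lhs => rw [← ENNReal.ofReal_toReal hK_ne_top]
    exact ENNReal.ofReal_le_ofReal (by linarith)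
  intro E _hE
  set C : ℝ := K.toReal + 1 with hC
  have hCpos : (0 : ℝ) < C := by positivity
  have hC0 : ENNReal.ofReal C ≠ 0 := (ENNReal.ofReal_pos.mpr hCpos).ne'
  -- the key estimate for an arbitrary admissible covering
  have key : ∀ (c : ℕ → X) (rad : ℕ → ℝ), (∀ j, 0 < rad j) →
      (∀ j, ENNReal.ofReal (rad j) ≤ ENNReal.ofReal R) →
      E ⊆ ⋃ j, ball (c j) (rad j) →
      μ E ≤ ENNReal.ofReal C *
        (∑' i : ℤ,
          (∑' j : {j : ℕ // (2 : ℝ) ^ (-i) ≤ rad j ∧ rad j < (2 : ℝ) ^ (-i + 1)},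
            μ (ball (c j) (rad j)) / ENNReal.ofReal (rad j ^ d)) ^ θ) ^ (1 / θ) := by
    intro c rad hp hr hcov
    set S : ℤ → ENNReal := fun i =>
      ∑' j : {j : ℕ // (2 : ℝ) ^ (-i) ≤ rad j ∧ rad j < (2 : ℝ) ^ (-i + 1)},
        μ (ball (c j) (rad j)) / ENNReal.ofReal (rad j ^ d) with hS
    set T : ENNReal := (∑' i : ℤ, S i ^ θ) ^ (1 / θ) with hT
    have hST : ∀ i, S i ≤ T := by
      intro i
      have h1 : S i = (S i ^ θ) ^ (1 / θ) := by
        rw [← ENNReal.rpow_mul, mul_one_div_cancel hθ.ne', ENNReal.rpow_one]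
      rw [h1, hT]
      exact ENNReal.rpow_le_rpow (ENNReal.le_tsum i) (by positivity)
    have hcov2 : E ⊆ ⋃ i : ℤ,
        ⋃ j : {j : ℕ // (2 : ℝ) ^ (-i) ≤ rad j ∧ rad j < (2 : ℝ) ^ (-i + 1)},
          ball (c j) (rad j) := by
      intro x hx
      obtain ⟨j, hj⟩ := Set.mem_iUnion.mp (hcov hx)
      obtain ⟨i, hi1, hi2⟩ := exists_bucket (hp j)
      exact Set.mem_iUnion.mpr ⟨i, Set.mem_iUnion.mpr ⟨⟨j, hi1, hi2⟩, hj⟩⟩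
    set g : ℤ → ENNReal := fun i =>
      if (2 : ℝ) ^ (-i) ≤ R then ENNReal.ofReal (((2 : ℝ) ^ (-i + 1)) ^ d) else 0 with hg
    have hper : ∀ i : ℤ,
        (∑' j : {j : ℕ // (2 : ℝ) ^ (-i) ≤ rad j ∧ rad j < (2 : ℝ) ^ (-i + 1)},
          μ (ball (c j) (rad j))) ≤ g i * T := by
      intro i
      by_cases hPi : (2 : ℝ) ^ (-i) ≤ R
      · have hstep : ∀ j : {j : ℕ // (2 : ℝ) ^ (-i) ≤ rad j ∧ rad j < (2 : ℝ) ^ (-i + 1)},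
            μ (ball (c j) (rad j)) ≤
              (μ (ball (c j) (rad j)) / ENNReal.ofReal (rad j ^ d)) *
                ENNReal.ofReal (((2 : ℝ) ^ (-i + 1)) ^ d) := by
          intro j
          have h0 : ENNReal.ofReal ((rad j : ℝ) ^ d) ≠ 0 :=
            (ENNReal.ofReal_pos.mpr (Real.rpow_pos_of_pos (hp j) d)).ne'
          have hle : ENNReal.ofReal ((rad j : ℝ) ^ d) ≤
              ENNReal.ofReal (((2 : ℝ) ^ (-i + 1)) ^ d) :=
            ENNReal.ofReal_le_ofReal (Real.rpow_le_rpow (hp j).le j.2.2.le hd.le)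
          calc μ (ball (c j) (rad j))
              = μ (ball (c j) (rad j)) / ENNReal.ofReal ((rad j : ℝ) ^ d) *
                  ENNReal.ofReal ((rad j : ℝ) ^ d) :=
                (ENNReal.div_mul_cancel h0 ENNReal.ofReal_ne_top).symm
          _ ≤ _ := mul_le_mul_right hle _
        calc (∑' j : {j : ℕ // (2 : ℝ) ^ (-i) ≤ rad j ∧ rad j < (2 : ℝ) ^ (-i + 1)},
              μ (ball (c j) (rad j)))
            ≤ ∑' j : {j : ℕ // (2 : ℝ) ^ (-i) ≤ rad j ∧ rad j < (2 : ℝ) ^ (-i + 1)},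
              (μ (ball (c j) (rad j)) / ENNReal.ofReal (rad j ^ d)) *
                ENNReal.ofReal (((2 : ℝ) ^ (-i + 1)) ^ d) := ENNReal.tsum_le_tsum hstep
        _ = S i * ENNReal.ofReal (((2 : ℝ) ^ (-i + 1)) ^ d) := ENNReal.tsum_mul_right
        _ ≤ T * ENNReal.ofReal (((2 : ℝ) ^ (-i + 1)) ^ d) := mul_le_mul_left (hST i) _
        _ = g i * T := by rw [hg]; simp only [if_pos hPi]; ring
      · have hempty : IsEmpty {j : ℕ // (2 : ℝ) ^ (-i) ≤ rad j ∧ rad j < (2 : ℝ) ^ (-i + 1)} := by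
          refine ⟨fun j => hPi ?_⟩
          have h1 : rad j ≤ R := by
            have := hr j
            rwa [ENNReal.ofReal_le_ofReal_iff hR.le] at this
          exact le_trans j.2.1 h1
        rw [tsum_empty]
        exact zero_le
    -- summing the bucket weights
    have hgh : ∀ i : ℤ, g i ≤
        (fun i : ℤ => if i₀ ≤ i then ENNReal.ofReal (((2 : ℝ) ^ (-i + 1)) ^ d) else 0) i := by
      intro i
      by_cases hPi : (2 : ℝ) ^ (-i) ≤ R
      · have h2 : -(i : ℝ) ≤ Real.logb 2 R := by
          have h3 := Real.logb_le_logb_of_le one_lt_two (zpow_pos two_pos (-i)) hPi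
          rwa [show ((2 : ℝ) ^ (-i)) = (2 : ℝ) ^ ((-i : ℤ) : ℝ) from (Real.rpow_intCast 2 (-i)).symm,
            Real.logb_rpow (by norm_num) (by norm_num), Int.cast_neg] at h3
        have h4 : i₀ ≤ i := Int.ceil_le.mpr (by push_cast; linarith)
        simp only [hg, if_pos hPi, if_pos h4, le_refl]
      · simp only [hg, if_neg hPi, zero_le]
    have hsum_g : (∑' i : ℤ, g i) ≤ K := by
      calc (∑' i : ℤ, g i)
          ≤ ∑' i : ℤ, (if i₀ ≤ i then ENNReal.ofReal (((2 : ℝ) ^ (-i + 1)) ^ d) else 0) :=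
            ENNReal.tsum_le_tsum hgh
      _ = ∑' n : ℕ, (if i₀ ≤ i₀ + (n : ℤ) then
            ENNReal.ofReal (((2 : ℝ) ^ (-(i₀ + (n : ℤ)) + 1)) ^ d) else 0) := by
            refine (Function.Injective.tsum_eq (g := fun n : ℕ => i₀ + (n : ℤ)) ?_ ?_).symm
            · intro a b hab
              simpa using hab
            · intro i hi
              rcases lt_or_ge i i₀ with h | h
              · exfalso
                apply hi
                simp [if_neg (not_le.mpr h)]
              · exact ⟨(i - i₀).toNat, by simp; omega⟩
      _ = ∑' n : ℕ, ENNReal.ofReal b * rE ^ n := by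
            congr 1
            funext n
            rw [if_pos (by omega : i₀ ≤ i₀ + (n : ℤ))]
            rw [hrE, ← ENNReal.ofReal_pow hr2d_pos.le, ← ENNReal.ofReal_mul hb_pos.le]
            congr 1
            have h1 : (2 : ℝ) ^ (-(i₀ + (n : ℤ)) + 1) = (2 : ℝ) ^ (-i₀ + 1) * (2 : ℝ) ^ (-(n : ℤ)) := by
              rw [← zpow_add₀ (two_ne_zero)]
              ring_nf
            rw [h1, Real.mul_rpow (zpow_pos two_pos _).le (zpow_pos two_pos _).le]
            rw [hb]
            congr 1
            rw [show ((2 : ℝ) ^ (-(n : ℤ))) = (2 : ℝ) ^ ((-(n : ℤ) : ℤ) : ℝ) from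
              (Real.rpow_intCast 2 _).symm]
            rw [← Real.rpow_natCast r2d n, hr2d]
            rw [← Real.rpow_mul two_pos.le, ← Real.rpow_mul two_pos.le]
            congr 1
            push_cast
            ring
      _ = ENNReal.ofReal b * (1 - rE)⁻¹ := by
            rw [ENNReal.tsum_mul_left, ENNReal.tsum_geometric]
      _ = K := hK.symm
    calc μ E ≤ μ (⋃ i : ℤ,
          ⋃ j : {j : ℕ // (2 : ℝ) ^ (-i) ≤ rad j ∧ rad j < (2 : ℝ) ^ (-i + 1)},
            ball (c j) (rad j)) := measure_mono hcov2
    _ ≤ ∑' i : ℤ, μ (⋃ j : {j : ℕ // (2 : ℝ) ^ (-i) ≤ rad j ∧ rad j < (2 : ℝ) ^ (-i + 1)},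
          ball (c j) (rad j)) := measure_iUnion_le _
    _ ≤ ∑' i : ℤ, (∑' j : {j : ℕ // (2 : ℝ) ^ (-i) ≤ rad j ∧ rad j < (2 : ℝ) ^ (-i + 1)},
          μ (ball (c j) (rad j))) := ENNReal.tsum_le_tsum fun i => measure_iUnion_le _
    _ ≤ ∑' i : ℤ, g i * T := ENNReal.tsum_le_tsum hper
    _ = (∑' i : ℤ, g i) * T := ENNReal.tsum_mul_right
    _ ≤ K * T := mul_le_mul_left hsum_g _
    _ ≤ ENNReal.ofReal C * T := mul_le_mul_left hKC _
  -- conclude via the infimum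
  have hdiv : μ E / ENNReal.ofReal C ≤ NHcontent μ d θ (ENNReal.ofReal R) E := by
    rw [NHcontent]
    refine le_iInf fun c => le_iInf fun rad => le_iInf fun h1 => le_iInf fun h2 =>
      le_iInf fun h3 => ?_
    exact ENNReal.div_le_of_le_mul' (key c rad h1 h2 h3)
  have := (ENNReal.div_le_iff_le_mul (Or.inl hC0) (Or.inl ENNReal.ofReal_ne_top)).mp hdiv
  rwa [mul_comm] at this
end

section
/- Let 0 ≤ d < ∞, 0 < θ < ∞, 0 < R ≤ ∞, and set r = min{1, θ}. Then for any countable family of sets E_k ⊂ X, H^{d,θ}_R(⋃_k E_k)^r ≤ ∑_k H^{d,θ}_R(E_k)^r. -/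
/-!
Glue near-optimal coverings of the sets `E k` into one covering of their union. Its dyadic
block sums are the sums over `k` of the block sums of the individual coverings, so its cost is
the `ℓ^θ(ℤ)` quasi-norm of a countable sum of sequences. That quasi-norm is `min 1 θ`-subadditive:
for `θ ≥ 1` by Minkowski's inequality, and for `θ ≤ 1` because `t ↦ t ^ θ` is subadditive.
-/

open MeasureTheory Metric

open scoped ENNReal

theorem ENNReal.rpow_tsum_le_tsum_rpow {ι : Type*} {p : ℝ} (hp0 : 0 < p) (hp1 : p ≤ 1)
    (f : ι → ℝ≥0∞) : (∑' i, f i) ^ p ≤ ∑' i, f i ^ p := by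
  have hsum (s : Finset ι) : (∑ i ∈ s, f i) ^ p ≤ ∑ i ∈ s, f i ^ p :=
    Finset.le_sum_of_subadditive (· ^ p) (ENNReal.zero_rpow_of_pos hp0).le
      (fun x y => ENNReal.rpow_add_le_add_rpow x y hp0.le hp1) s f
  rw [ENNReal.tsum_eq_iSup_sum, ← ENNReal.orderIsoRpow_apply p hp0,
    (ENNReal.orderIsoRpow p hp0).map_iSup]
  exact iSup_le fun s => (hsum s).trans (ENNReal.sum_le_tsum s)

namespace MeasureTheory

variable {α : Type*} [MeasurableSpace α] {μ : Measure α}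

theorem eLpNorm'_iSup_of_monotone {q : ℝ} (hq : 0 < q) {f : ℕ → α → ℝ≥0∞}
    (hf : ∀ n, AEMeasurable (f n) μ) (hmono : Monotone f) :
    eLpNorm' (⨆ n, f n) q μ = ⨆ n, eLpNorm' (f n) q μ := by
  have hpow (x : ℕ → ℝ≥0∞) (p : ℝ) (hp : 0 < p) : (⨆ n, x n) ^ p = ⨆ n, x n ^ p := by
    rw [← ENNReal.orderIsoRpow_apply p hp, (ENNReal.orderIsoRpow p hp).map_iSup]
    rfl
  simp only [eLpNorm', enorm_eq_self, iSup_apply, hpow _ q hq]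
  rw [lintegral_iSup' (fun n => (hf n).pow_const q)
    (ae_of_all _ fun a m n hmn => ENNReal.rpow_le_rpow (hmono hmn a) hq.le),
    hpow _ _ (one_div_pos.2 hq)]

theorem eLpNorm'_tsum_le {q : ℝ} (hq : 1 ≤ q) {f : ℕ → α → ℝ≥0∞}
    (hf : ∀ k, AEMeasurable (f k) μ) :
    eLpNorm' (∑' k, f k) q μ ≤ ∑' k, eLpNorm' (f k) q μ := by
  have hpartial : Monotone fun n => ∑ k ∈ Finset.range n, f k := fun m n hmn =>
    Finset.sum_le_sum_of_subset (Finset.range_subset_range.2 hmn)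
  have htsum : ∑' k, f k = ⨆ n, ∑ k ∈ Finset.range n, f k := by
    funext a
    simp only [ENNReal.tsum_apply, iSup_apply, Finset.sum_apply, ENNReal.tsum_eq_iSup_nat]
  calc eLpNorm' (∑' k, f k) q μ
      = ⨆ n, eLpNorm' (∑ k ∈ Finset.range n, f k) q μ := by
        rw [htsum, eLpNorm'_iSup_of_monotone (one_pos.trans_le hq)
          (fun n => Finset.aemeasurable_sum _ fun k _ => hf k) hpartial]
    _ ≤ ⨆ n, ∑ k ∈ Finset.range n, eLpNorm' (f k) q μ :=
        iSup_mono fun n => eLpNorm'_sum_le (fun k _ => (hf k).aestronglyMeasurable) hq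
    _ ≤ ∑' k, eLpNorm' (f k) q μ := iSup_le fun n => ENNReal.sum_le_tsum _

theorem eLpNorm'_tsum_rpow_min_le {q : ℝ} (hq : 0 < q) {f : ℕ → α → ℝ≥0∞}
    (hf : ∀ k, AEMeasurable (f k) μ) :
    eLpNorm' (∑' k, f k) q μ ^ min 1 q ≤ ∑' k, eLpNorm' (f k) q μ ^ min 1 q := by
  rcases le_total q 1 with hq1 | hq1
  · simp only [min_eq_right hq1, ← lintegral_rpow_enorm_eq_rpow_eLpNorm' hq, enorm_eq_self,
      ENNReal.tsum_apply]
    calc ∫⁻ a, (∑' k, f k a) ^ q ∂μ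
        ≤ ∫⁻ a, ∑' k, f k a ^ q ∂μ :=
          lintegral_mono fun a => ENNReal.rpow_tsum_le_tsum_rpow hq hq1 _
      _ = ∑' k, ∫⁻ a, f k a ^ q ∂μ := lintegral_tsum fun k => (hf k).pow_const q
  · simpa only [min_eq_left hq1, ENNReal.rpow_one] using eLpNorm'_tsum_le hq1 hf

end MeasureTheory

section NHcontent

variable {X : Type*} [MetricSpace X] {R : ℝ≥0∞} {ι κ : Type*}

noncomputable def dyadicSum (rad : ι → ℝ) (w : ι → ℝ≥0∞) (i : ℤ) : ℝ≥0∞ :=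
  ∑' j : {j : ι // (2 : ℝ) ^ (-i) ≤ rad j ∧ rad j < (2 : ℝ) ^ (-i + 1)}, w j

theorem dyadicSum_comp_equiv (e : κ ≃ ι) (rad : ι → ℝ) (w : ι → ℝ≥0∞) :
    dyadicSum (rad ∘ e) (w ∘ e) = dyadicSum rad w := by
  funext i
  exact (e.subtypeEquiv (q := fun j => (2 : ℝ) ^ (-i) ≤ rad j ∧ rad j < (2 : ℝ) ^ (-i + 1))
    fun _ => Iff.rfl).tsum_eq (fun j => w j.1)

theorem dyadicSum_uncurry (rad : κ → ι → ℝ) (w : κ → ι → ℝ≥0∞) :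
    dyadicSum (Function.uncurry rad) (Function.uncurry w) = ∑' k, dyadicSum (rad k) (w k) := by
  ext i
  rw [ENNReal.tsum_apply]
  let I : Set ℝ := Set.Ico ((2 : ℝ) ^ (-i)) ((2 : ℝ) ^ (-i + 1))
  calc dyadicSum (Function.uncurry rad) (Function.uncurry w) i
      = ∑' p : κ × ι, (Function.uncurry rad ⁻¹' I).indicator (Function.uncurry w) p :=
        tsum_subtype (Function.uncurry rad ⁻¹' I) (Function.uncurry w)
    _ = ∑' k, ∑' j, (rad k ⁻¹' I).indicator (w k) j := ENNReal.tsum_prod'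
    _ = ∑' k, dyadicSum (rad k) (w k) i :=
        tsum_congr fun k => (tsum_subtype (rad k ⁻¹' I) (w k)).symm

def IsNHCover (R : ℝ≥0∞) (E : Set X) (c : ι → X) (rad : ι → ℝ) : Prop :=
  (∀ j, 0 < rad j) ∧ (∀ j, ENNReal.ofReal (rad j) ≤ R) ∧ E ⊆ ⋃ j, ball (c j) (rad j)

theorem IsNHCover.comp_equiv {E : Set X} {c : ι → X} {rad : ι → ℝ} (h : IsNHCover R E c rad)
    (e : κ ≃ ι) : IsNHCover R E (c ∘ e) (rad ∘ e) := by
  obtain ⟨hpos, hle, hcov⟩ := h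
  refine ⟨fun j => hpos (e j), fun j => hle (e j), hcov.trans fun x hx => ?_⟩
  obtain ⟨j, hj⟩ := Set.mem_iUnion.1 hx
  exact Set.mem_iUnion.2 ⟨e.symm j, by simpa using hj⟩

theorem IsNHCover.uncurry {E : κ → Set X} {c : κ → ι → X} {rad : κ → ι → ℝ}
    (h : ∀ k, IsNHCover R (E k) (c k) (rad k)) :
    IsNHCover R (⋃ k, E k) (Function.uncurry c) (Function.uncurry rad) := by
  refine ⟨fun p => (h p.1).1 p.2, fun p => (h p.1).2.1 p.2, Set.iUnion_subset fun k => ?_⟩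
  refine (h k).2.2.trans (Set.iUnion_subset fun j => ?_)
  exact Set.subset_iUnion (fun p : κ × ι => ball (c p.1 p.2) (rad p.1 p.2)) (k, j)

variable [MeasurableSpace X]

/-- The `ℓ^θ(ℤ)` quasi-norm of the dyadic block sums is written as `eLpNorm'` for the counting
measure on `ℤ`, so that Minkowski's inequality is available. -/
noncomputable def coverCost (μ : Measure X) (d θ : ℝ) (c : ι → X) (rad : ι → ℝ) : ℝ≥0∞ :=
  eLpNorm' (dyadicSum rad fun j => μ (ball (c j) (rad j)) / ENNReal.ofReal (rad j ^ d)) θ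
    Measure.count

theorem coverCost_comp_equiv (μ : Measure X) (d θ : ℝ) (c : ι → X) (rad : ι → ℝ) (e : κ ≃ ι) :
    coverCost μ d θ (c ∘ e) (rad ∘ e) = coverCost μ d θ c rad := by
  unfold coverCost
  rw [← dyadicSum_comp_equiv e]
  rfl

theorem coverCost_uncurry_rpow_le (μ : Measure X) (d : ℝ) {θ : ℝ} (hθ : 0 < θ)
    (c : ℕ → ι → X) (rad : ℕ → ι → ℝ) :
    coverCost μ d θ (Function.uncurry c) (Function.uncurry rad) ^ min 1 θ ≤
      ∑' k, coverCost μ d θ (c k) (rad k) ^ min 1 θ := by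
  have hsplit := dyadicSum_uncurry rad fun k j =>
    μ (ball (c k j) (rad k j)) / ENNReal.ofReal (rad k j ^ d)
  unfold coverCost
  erw [hsplit]
  exact eLpNorm'_tsum_rpow_min_le hθ fun k => Measurable.of_discrete.aemeasurable

theorem NHcontent_eq_iInf_coverCost (μ : Measure X) (d θ : ℝ) (R : ℝ≥0∞) (E : Set X) :
    NHcontent μ d θ R E =
      ⨅ (c : ℕ → X) (rad : ℕ → ℝ) (_ : IsNHCover R E c rad), coverCost μ d θ c rad := by
  simp only [NHcontent, IsNHCover, iInf_and, coverCost, eLpNorm', enorm_eq_self, lintegral_count,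
    dyadicSum]

theorem NHcontent_le_coverCost (μ : Measure X) (d θ : ℝ) {E : Set X} {c : ℕ → X}
    {rad : ℕ → ℝ} (h : IsNHCover R E c rad) : NHcontent μ d θ R E ≤ coverCost μ d θ c rad := by
  rw [NHcontent_eq_iInf_coverCost]
  exact iInf₂_le_of_le c rad (iInf_le _ h)

theorem exists_isNHCover_coverCost_rpow_lt (μ : Measure X) (d θ : ℝ) (E : Set X) {r : ℝ}
    (hr : 0 < r) (hfin : NHcontent μ d θ R E ^ r ≠ ∞) {δ : ℝ≥0∞} (hδ : δ ≠ 0) :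
    ∃ (c : ℕ → X) (rad : ℕ → ℝ), IsNHCover R E c rad ∧
      coverCost μ d θ c rad ^ r < NHcontent μ d θ R E ^ r + δ := by
  have hlt := ENNReal.lt_add_right hfin hδ
  conv_lhs at hlt => rw [NHcontent_eq_iInf_coverCost, ← ENNReal.orderIsoRpow_apply r hr]
  simpa only [OrderIso.map_iInf, ENNReal.orderIsoRpow_apply, iInf_lt_iff, exists_prop] using hlt

theorem NHcontent_iUnion_rpow_le (μ : Measure X) (d : ℝ) {θ : ℝ} (hθ : 0 < θ) {E : ℕ → Set X}
    {c : ℕ → ℕ → X} {rad : ℕ → ℕ → ℝ} (h : ∀ k, IsNHCover R (E k) (c k) (rad k)) :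
    NHcontent μ d θ R (⋃ k, E k) ^ min 1 θ ≤ ∑' k, coverCost μ d θ (c k) (rad k) ^ min 1 θ := by
  let e : ℕ ≃ ℕ × ℕ := (Denumerable.eqv (ℕ × ℕ)).symm
  have hcost := NHcontent_le_coverCost μ d θ ((IsNHCover.uncurry h).comp_equiv e)
  rw [coverCost_comp_equiv] at hcost
  exact (ENNReal.rpow_le_rpow hcost (lt_min one_pos hθ).le).trans
    (coverCost_uncurry_rpow_le μ d hθ c rad)

end NHcontent

theorem NHcontent_subadditive_general {X : Type*} [MetricSpace X] [MeasurableSpace X]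
    (μ : Measure X)
    (d θ : ℝ) (hθ : 0 < θ) (R : ENNReal)
    (E : ℕ → Set X) :
    NHcontent μ d θ R (⋃ k, E k) ^ min 1 θ ≤
      ∑' k, NHcontent μ d θ R (E k) ^ min 1 θ := by
  refine ENNReal.le_of_forall_pos_le_add fun ε hε hlt => ?_
  obtain ⟨δ, hδ, hδsum⟩ := ENNReal.exists_pos_sum_of_countable (ENNReal.coe_ne_zero.2 hε.ne') ℕ
  choose c rad hcover hcost using fun k =>
    exists_isNHCover_coverCost_rpow_lt μ d θ (E k) (lt_min one_pos hθ)
      (ne_top_of_le_ne_top hlt.ne (ENNReal.le_tsum k)) (ENNReal.coe_ne_zero.2 (hδ k).ne')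
  calc NHcontent μ d θ R (⋃ k, E k) ^ min 1 θ
      ≤ ∑' k, coverCost μ d θ (c k) (rad k) ^ min 1 θ := NHcontent_iUnion_rpow_le μ d hθ hcover
    _ ≤ ∑' k, (NHcontent μ d θ R (E k) ^ min 1 θ + δ k) :=
        ENNReal.tsum_le_tsum fun k => (hcost k).le
    _ = ∑' k, NHcontent μ d θ R (E k) ^ min 1 θ + ∑' k, (δ k : ℝ≥0∞) := ENNReal.tsum_add
    _ ≤ ∑' k, NHcontent μ d θ R (E k) ^ min 1 θ + ε := by gcongr

theorem NHcontent_subadditive {X : Type*} [MetricSpace X] [MeasurableSpace X]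
    (μ : Measure X)
    (d θ : ℝ) (hd : 0 ≤ d) (hθ : 0 < θ) (R : ENNReal) (hR : 0 < R)
    (E : ℕ → Set X) :
    NHcontent μ d θ R (⋃ k, E k) ^ min 1 θ ≤
      ∑' k, NHcontent μ d θ R (E k) ^ min 1 θ :=
  NHcontent_subadditive_general μ d θ hθ R E
end
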